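/- Let b ∈ (0,3], T > 0. Assume the uniqueness property for the b-equation: if v₁ and v₂ are classical solutions of the b-equation on [0,T)×ℝ with v₁(t₁,x) = v₂(t₁,x) for all x ∈ ℝ at some time t₁ ∈ (0,T), then v₁ = v₂ on [0,T)×ℝ (this follows from local well-posedness of the Cauchy problem in H^s, s > 3/2). If u is a classical solution of the b-equation on [0,T)×ℝ that vanishes identically on a nonempty open subset of (0,T)×ℝ, then u(t,x) = 0 for all (t,x) ∈ [0,T)×ℝ. -/

import Mathlib

open MeasureTheory Set

/-- The inverse Helmholtz operator `Λ⁻² = (1 - ∂ₓ²)⁻¹` on the line, given by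
convolution with the kernel `e^{-|x|}/2`. -/
noncomputable def lam2 (w : ℝ → ℝ) (x : ℝ) : ℝ :=
  (1/2) * ∫ y : ℝ, Real.exp (-|x - y|) * w y

/-- A classical solution of the `b`-equation
`uₜ + u uₓ = -∂ₓΛ⁻²((b/2)u² + ((3-b)/2)uₓ²)` on `[0,T) × ℝ`: for each `t ∈ [0,T)`,
`u(t,·)` is continuously differentiable with `u(t,·)` and `∂ₓu(t,·)` continuous,
bounded and integrable; `∂ₜu` exists on `(0,T) × ℝ`; and the equation holds
pointwise on `(0,T) × ℝ`. -/
def IsBEquationSolution (b T : ℝ) (u : ℝ → ℝ → ℝ) : Prop :=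
  (∀ t ∈ Set.Ico (0:ℝ) T,
    ContDiff ℝ 1 (u t) ∧
    (∃ C : ℝ, ∀ x, |u t x| ≤ C) ∧ Integrable (u t) ∧
    (∃ C : ℝ, ∀ x, |deriv (u t) x| ≤ C) ∧ Integrable (deriv (u t))) ∧
  (∀ t ∈ Set.Ioo (0:ℝ) T, ∀ x : ℝ, DifferentiableAt ℝ (fun s => u s x) t) ∧
  (∀ t ∈ Set.Ioo (0:ℝ) T, ∀ x : ℝ,
    deriv (fun s => u s x) t + u t x * deriv (u t) x =
      -(deriv (lam2 (fun y => (b/2) * (u t y)^2 + ((3-b)/2) * (deriv (u t) y)^2)) x))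

/-! If `u` vanishes near `(t₁, x₀)`, the equation at time `t₁` says that `∂ₓΛ⁻²F` vanishes
near `x₀`, where `F = (b/2) u² + ((3-b)/2) uₓ² ≥ 0` also vanishes near `x₀`. Since
`∂ₓ(∂ₓΛ⁻²F) = Λ⁻²F - F`, this forces `Λ⁻²F(x₀) = 0`, and as `Λ⁻²` has a positive kernel, `F ≡ 0`.
For `b > 0` this means `u(t₁, ·) ≡ 0`, and uniqueness against the zero solution gives `u ≡ 0`. -/

open Filter Topology Real

section HelmholtzInverse

variable {g F : ℝ → ℝ}

theorem hasDerivAt_setIntegral_Iic (hg : Continuous g) (hgi : ∀ a, IntegrableOn g (Iic a))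
    (x : ℝ) : HasDerivAt (fun a => ∫ y in Iic a, g y) (g x) x := by
  refine ((intervalIntegral.integral_hasDerivAt_right (hg.intervalIntegrable 0 x)
    hg.aestronglyMeasurable.stronglyMeasurableAtFilter hg.continuousAt).const_add
    (∫ y in Iic 0, g y)).congr_of_eventuallyEq (Eventually.of_forall fun a => ?_)
  dsimp only
  rw [← intervalIntegral.integral_Iic_sub_Iic (hgi 0) (hgi a), add_sub_cancel]

theorem hasDerivAt_setIntegral_Ioi (hg : Continuous g) (hgi : ∀ a, IntegrableOn g (Ioi a))
    (x : ℝ) : HasDerivAt (fun a => ∫ y in Ioi a, g y) (-g x) x := by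
  refine ((intervalIntegral.integral_hasDerivAt_right (hg.intervalIntegrable 0 x)
    hg.aestronglyMeasurable.stronglyMeasurableAtFilter hg.continuousAt).const_sub
    (∫ y in Ioi 0, g y)).congr_of_eventuallyEq (Eventually.of_forall fun a => ?_)
  dsimp only
  rw [← intervalIntegral.integral_Ioi_sub_Ioi' (hgi 0) (hgi a), sub_sub_cancel]

theorem MeasureTheory.Integrable.integrableOn_Iic_exp_mul (hF : Integrable F) (a : ℝ) :
    IntegrableOn (fun y => exp y * F y) (Iic a) :=
  hF.integrableOn.bdd_mul (c := exp a) continuous_exp.aestronglyMeasurable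
    (ae_restrict_of_forall_mem measurableSet_Iic fun y hy => by simpa using hy)

theorem MeasureTheory.Integrable.integrableOn_Ioi_exp_neg_mul (hF : Integrable F) (a : ℝ) :
    IntegrableOn (fun y => exp (-y) * F y) (Ioi a) :=
  hF.integrableOn.bdd_mul (c := exp (-a)) (by fun_prop)
    (ae_restrict_of_forall_mem measurableSet_Ioi fun y hy => by simpa using (mem_Ioi.1 hy).le)

theorem MeasureTheory.Integrable.exp_neg_abs_sub_mul (hF : Integrable F) (x : ℝ) :
    Integrable (fun y => exp (-|x - y|) * F y) :=
  hF.bdd_mul (c := 1) (by fun_prop) (Eventually.of_forall fun y => by simp)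

noncomputable def expIntegralIic (F : ℝ → ℝ) (x : ℝ) : ℝ := ∫ y in Iic x, exp y * F y

noncomputable def expNegIntegralIoi (F : ℝ → ℝ) (x : ℝ) : ℝ := ∫ y in Ioi x, exp (-y) * F y

theorem lam2_eq (hF : Integrable F) (x : ℝ) :
    lam2 F x = (exp (-x) * expIntegralIic F x + exp x * expNegIntegralIoi F x) / 2 := by
  have hIic : ∫ y in Iic x, exp (-|x - y|) * F y = exp (-x) * expIntegralIic F x := by
    rw [expIntegralIic, ← integral_const_mul]
    refine setIntegral_congr_fun measurableSet_Iic fun y hy => ?_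
    rw [abs_of_nonneg (sub_nonneg.2 hy), ← mul_assoc, ← exp_add]
    ring_nf
  have hIoi : ∫ y in Ioi x, exp (-|x - y|) * F y = exp x * expNegIntegralIoi F x := by
    rw [expNegIntegralIoi, ← integral_const_mul]
    refine setIntegral_congr_fun measurableSet_Ioi fun y hy => ?_
    rw [abs_of_neg (sub_neg.2 hy), ← mul_assoc, ← exp_add]
    ring_nf
  have hint := hF.exp_neg_abs_sub_mul x
  rw [lam2, ← intervalIntegral.integral_Iic_add_Ioi hint.integrableOn hint.integrableOn, hIic,
    hIoi]
  ring

theorem hasDerivAt_expIntegralIic (hF : Continuous F) (hFi : Integrable F) (x : ℝ) :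
    HasDerivAt (expIntegralIic F) (exp x * F x) x :=
  hasDerivAt_setIntegral_Iic (by fun_prop) hFi.integrableOn_Iic_exp_mul x

theorem hasDerivAt_expNegIntegralIoi (hF : Continuous F) (hFi : Integrable F) (x : ℝ) :
    HasDerivAt (expNegIntegralIoi F) (-(exp (-x) * F x)) x :=
  hasDerivAt_setIntegral_Ioi (by fun_prop) hFi.integrableOn_Ioi_exp_neg_mul x

theorem hasDerivAt_lam2 (hF : Continuous F) (hFi : Integrable F) (x : ℝ) :
    HasDerivAt (lam2 F)
      ((exp x * expNegIntegralIoi F x - exp (-x) * expIntegralIic F x) / 2) x := by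
  have h := ((((hasDerivAt_neg x).exp).mul (hasDerivAt_expIntegralIic hF hFi x)).add
    ((hasDerivAt_exp x).mul (hasDerivAt_expNegIntegralIoi hF hFi x))).div_const 2
  refine (h.congr_of_eventuallyEq (Eventually.of_forall (lam2_eq hFi))).congr_deriv ?_
  rw [exp_neg]
  field_simp
  ring

theorem deriv_lam2 (hF : Continuous F) (hFi : Integrable F) :
    deriv (lam2 F) = fun x => (exp x * expNegIntegralIoi F x - exp (-x) * expIntegralIic F x) / 2 :=
  funext fun x => (hasDerivAt_lam2 hF hFi x).deriv

theorem hasDerivAt_deriv_lam2 (hF : Continuous F) (hFi : Integrable F) (x : ℝ) :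
    HasDerivAt (deriv (lam2 F)) (lam2 F x - F x) x := by
  have h := ((((hasDerivAt_exp x).mul (hasDerivAt_expNegIntegralIoi hF hFi x)).sub
    (((hasDerivAt_neg x).exp).mul (hasDerivAt_expIntegralIic hF hFi x))).div_const 2)
  rw [deriv_lam2 hF hFi, lam2_eq hFi]
  refine h.congr_deriv ?_
  rw [exp_neg]
  field_simp
  ring

theorem eq_zero_of_lam2_eq_zero (hF : Continuous F) (hF0 : 0 ≤ F) (hFi : Integrable F) {x : ℝ}
    (h : lam2 F x = 0) : F = 0 := by
  have hint : ∫ y, exp (-|x - y|) * F y = 0 := by simpa [lam2] using h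
  have hae := (integral_eq_zero_iff_of_nonneg (fun y => mul_nonneg (exp_pos _).le (hF0 y))
    (hFi.exp_neg_abs_sub_mul x)).1 hint
  have hcont : Continuous fun y => exp (-|x - y|) * F y := by fun_prop
  funext y
  have hy := congrFun ((hcont.ae_eq_iff_eq volume continuous_const).1 hae) y
  exact (mul_eq_zero.1 hy).resolve_left (exp_pos _).ne'

theorem eq_zero_of_deriv_lam2_eventuallyEq_zero (hF : Continuous F) (hF0 : 0 ≤ F)
    (hFi : Integrable F) {x : ℝ} (hFx : F x = 0) (hd : deriv (lam2 F) =ᶠ[𝓝 x] 0) : F = 0 := by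
  have h := (hasDerivAt_deriv_lam2 hF hFi x).unique
    ((hasDerivAt_const x 0).congr_of_eventuallyEq hd)
  exact eq_zero_of_lam2_eq_zero hF hF0 hFi (by linarith)

end HelmholtzInverse

theorem MeasureTheory.Integrable.sq_of_abs_le {f : ℝ → ℝ} {C : ℝ} (hf : Integrable f)
    (hC : ∀ x, |f x| ≤ C) : Integrable fun x => f x ^ 2 := by
  simpa only [sq] using hf.bdd_mul hf.aestronglyMeasurable (Eventually.of_forall hC)

theorem Filter.Eventually.curry_swap_nhds {X Y : Type*} [TopologicalSpace X] [TopologicalSpace Y]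
    {P : X → Y → Prop} {t : X} {x : Y} (h : ∀ᶠ p in 𝓝 (t, x), P p.1 p.2) :
    ∀ᶠ y in 𝓝 x, ∀ᶠ s in 𝓝 t, P s y := by
  rw [nhds_prod_eq] at h
  obtain ⟨_, hP, _, hQ, hPQ⟩ := eventually_prod_iff.1 h
  exact hQ.mono fun y hy => hP.mono fun s hs => hPQ hs hy

section BEquation

variable {b T : ℝ} {f : ℝ → ℝ} {u : ℝ → ℝ → ℝ}

noncomputable def bForcing (b : ℝ) (f : ℝ → ℝ) (y : ℝ) : ℝ :=
  b / 2 * f y ^ 2 + (3 - b) / 2 * deriv f y ^ 2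

theorem bForcing_nonneg (hb : b ∈ Icc (0 : ℝ) 3) : 0 ≤ bForcing b f := fun y =>
  add_nonneg (mul_nonneg (by linarith [hb.1]) (sq_nonneg _))
    (mul_nonneg (by linarith [hb.2]) (sq_nonneg _))

theorem eq_zero_of_bForcing_eq_zero (hb : b ∈ Ioc (0 : ℝ) 3) {y : ℝ} (h : bForcing b f y = 0) :
    f y = 0 := by
  have h₁ : 0 ≤ b / 2 * f y ^ 2 := mul_nonneg (by linarith [hb.1]) (sq_nonneg _)
  have h₂ : 0 ≤ (3 - b) / 2 * deriv f y ^ 2 := mul_nonneg (by linarith [hb.2]) (sq_nonneg _)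
  have h₃ : b / 2 * f y ^ 2 = 0 := by unfold bForcing at h; linarith
  simpa [hb.1.ne'] using h₃

theorem bForcing_eq_zero_of_eventuallyEq_zero {x : ℝ} (h : f =ᶠ[𝓝 x] 0) : bForcing b f x = 0 := by
  simp [bForcing, h.self_of_nhds, h.deriv_eq]

theorem ContDiff.continuous_bForcing (hf : ContDiff ℝ 1 f) : Continuous (bForcing b f) := by
  have hf₀ := hf.continuous
  have hf₁ := hf.continuous_deriv le_rfl
  unfold bForcing
  fun_prop

theorem MeasureTheory.Integrable.bForcing {C C' : ℝ} (hf : Integrable f) (hC : ∀ x, |f x| ≤ C)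
    (hf' : Integrable (deriv f)) (hC' : ∀ x, |deriv f x| ≤ C') : Integrable (bForcing b f) :=
  ((hf.sq_of_abs_le hC).const_mul _).add ((hf'.sq_of_abs_le hC').const_mul _)

theorem isBEquationSolution_zero (b T : ℝ) : IsBEquationSolution b T 0 := by
  have hlam : lam2 (bForcing b 0) = 0 := by
    funext x
    simp [lam2, bForcing]
  refine ⟨fun t _ => ⟨contDiff_const, ⟨0, by simp⟩, integrable_zero _ _ _, ⟨0, by simp⟩, by simp⟩,
    fun t _ x => differentiableAt_const 0, fun t _ x => ?_⟩
  change _ = -deriv (lam2 (bForcing b 0)) x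
  simp [hlam]

theorem IsBEquationSolution.deriv_lam2_eventuallyEq_zero (hu : IsBEquationSolution b T u)
    {t x : ℝ} (ht : t ∈ Ioo 0 T) (h : ∀ᶠ p in 𝓝 (t, x), u p.1 p.2 = 0) :
    deriv (lam2 (bForcing b (u t))) =ᶠ[𝓝 x] 0 := by
  filter_upwards [h.curry_swap_nhds (P := fun s y => u s y = 0)]
    with y (hy : (fun s => u s y) =ᶠ[𝓝 t] 0)
  have heq : _ = -deriv (lam2 (bForcing b (u t))) y := hu.2.2 t ht y
  rw [hy.deriv_eq, show u t y = 0 from hy.self_of_nhds] at heq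
  simpa using heq

theorem IsBEquationSolution.eq_zero_of_eventually_eq_zero (hb : b ∈ Ioc (0 : ℝ) 3)
    (hu : IsBEquationSolution b T u) {t x : ℝ} (ht : t ∈ Ioo 0 T)
    (h : ∀ᶠ p in 𝓝 (t, x), u p.1 p.2 = 0) : ∀ y, u t y = 0 := by
  obtain ⟨hC1, ⟨C, hC⟩, hint, ⟨C', hC'⟩, hint'⟩ := hu.1 t (Ioo_subset_Ico_self ht)
  have hx : u t =ᶠ[𝓝 x] 0 :=
    (h.curry_swap_nhds (P := fun s y => u s y = 0)).mono fun _ hy => hy.self_of_nhds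
  have hF := eq_zero_of_deriv_lam2_eventuallyEq_zero hC1.continuous_bForcing
    (bForcing_nonneg (Ioc_subset_Icc_self hb)) (hint.bForcing hC hint' hC')
    (bForcing_eq_zero_of_eventuallyEq_zero hx) (hu.deriv_lam2_eventuallyEq_zero ht h)
  exact fun y => eq_zero_of_bForcing_eq_zero hb (congrFun hF y)

end BEquation

theorem bEquation_unique_continuation_wellposed_general (b T : ℝ)
    (hb : b ∈ Set.Ioc (0:ℝ) 3)
    (huniq : ∀ v₁ v₂ : ℝ → ℝ → ℝ, IsBEquationSolution b T v₁ →
      IsBEquationSolution b T v₂ →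
      ∀ t₁ ∈ Set.Ioo (0:ℝ) T, (∀ x : ℝ, v₁ t₁ x = v₂ t₁ x) →
      ∀ t ∈ Set.Ico (0:ℝ) T, ∀ x : ℝ, v₁ t x = v₂ t x)
    (u : ℝ → ℝ → ℝ) (hu : IsBEquationSolution b T u)
    (Ω : Set (ℝ × ℝ)) (hΩopen : IsOpen Ω) (hΩne : Ω.Nonempty)
    (hΩsub : Ω ⊆ Set.Ioo (0:ℝ) T ×ˢ Set.univ)
    (hvan : ∀ p ∈ Ω, u p.1 p.2 = 0) :
    ∀ t ∈ Set.Ico (0:ℝ) T, ∀ x : ℝ, u t x = 0 := by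
  obtain ⟨⟨t₁, x₀⟩, hp⟩ := hΩne
  have ht₁ : t₁ ∈ Ioo 0 T := (hΩsub hp).1
  have hu₁ := hu.eq_zero_of_eventually_eq_zero hb ht₁ (eventually_of_mem (hΩopen.mem_nhds hp) hvan)
  exact huniq u 0 hu (isBEquationSolution_zero b T) t₁ ht₁ hu₁

/-- **Unique continuation for the `b`-equation via local well-posedness
(section 3.1).** Assuming the uniqueness property for classical solutions of the
`b`-equation (which follows from local well-posedness in `Hˢ`, `s > 3/2`), a
classical solution vanishing on a nonempty open subset of `(0,T) × ℝ` vanishes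
identically. -/
theorem bEquation_unique_continuation_wellposed (b T : ℝ)
    (hb : b ∈ Set.Ioc (0:ℝ) 3) (hT : 0 < T)
    (huniq : ∀ v₁ v₂ : ℝ → ℝ → ℝ, IsBEquationSolution b T v₁ →
      IsBEquationSolution b T v₂ →
      ∀ t₁ ∈ Set.Ioo (0:ℝ) T, (∀ x : ℝ, v₁ t₁ x = v₂ t₁ x) →
      ∀ t ∈ Set.Ico (0:ℝ) T, ∀ x : ℝ, v₁ t x = v₂ t x)
    (u : ℝ → ℝ → ℝ) (hu : IsBEquationSolution b T u)
    (Ω : Set (ℝ × ℝ)) (hΩopen : IsOpen Ω) (hΩne : Ω.Nonempty)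
    (hΩsub : Ω ⊆ Set.Ioo (0:ℝ) T ×ˢ Set.univ)
    (hvan : ∀ p ∈ Ω, u p.1 p.2 = 0) :
    ∀ t ∈ Set.Ico (0:ℝ) T, ∀ x : ℝ, u t x = 0 :=
  bEquation_unique_continuation_wellposed_general b T hb huniq u hu Ω hΩopen hΩne hΩsub hvan
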